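/- Let V₀, V₁, V₂ be symplectic vector spaces, L₀₁ ⊆ V₀⁻ × V₁ and L₁₂ ⊆ V₁⁻ × V₂ linear Lagrangian correspondences. Then the geometric composition L₀₁ ∘ L₁₂ := {(v₀, v₂) : ∃ v₁, (v₀,v₁) ∈ L₀₁ ∧ (v₁,v₂) ∈ L₁₂} is a Lagrangian subspace of V₀⁻ × V₂. -/

import Mathlib

open Submodule Module

abbrev BF (V : Type*) [AddCommGroup V] [Module ℝ V] := LinearMap.BilinForm ℝ V

def IsSymplectic {V : Type*} [AddCommGroup V] [Module ℝ V] (ω : BF V) : Prop :=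
  (∀ v, ω v v = 0) ∧ ω.Nondegenerate

def prodForm {V₀ V₁ : Type*} [AddCommGroup V₀] [Module ℝ V₀] [AddCommGroup V₁] [Module ℝ V₁]
    (ω₀ : BF V₀) (ω₁ : BF V₁) : BF (V₀ × V₁) :=
  ω₁.comp (LinearMap.snd ℝ V₀ V₁) (LinearMap.snd ℝ V₀ V₁)
    - ω₀.comp (LinearMap.fst ℝ V₀ V₁) (LinearMap.fst ℝ V₀ V₁)

def IsLagrangian {V : Type*} [AddCommGroup V] [Module ℝ V] (ω : BF V) (L : Submodule ℝ V) : Prop :=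
  ω.orthogonal L = L

def LagComp {V₀ V₁ V₂ : Type*} [AddCommGroup V₀] [Module ℝ V₀] [AddCommGroup V₁] [Module ℝ V₁]
    [AddCommGroup V₂] [Module ℝ V₂]
    (L₀₁ : Submodule ℝ (V₀ × V₁)) (L₁₂ : Submodule ℝ (V₁ × V₂)) : Submodule ℝ (V₀ × V₂) where
  carrier := {p | ∃ v₁, (p.1, v₁) ∈ L₀₁ ∧ (v₁, p.2) ∈ L₁₂}
  add_mem' := by
    rintro p q ⟨a, ha₁, ha₂⟩ ⟨b, hb₁, hb₂⟩
    exact ⟨a + b, by simpa using L₀₁.add_mem ha₁ hb₁, by simpa using L₁₂.add_mem ha₂ hb₂⟩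
  zero_mem' := ⟨0, by exact L₀₁.zero_mem, by exact L₁₂.zero_mem⟩
  smul_mem' := by
    rintro c p ⟨a, h₁, h₂⟩
    exact ⟨c • a, by simpa using L₀₁.smul_mem c h₁, by simpa using L₁₂.smul_mem c h₂⟩

/-
Work in `W = (V₀⁻ × V₁) × (V₁⁻ × V₂)` with the direct-sum form `Ω`. The composition is the image
of `(L₀₁ × L₁₂) ∩ D` under `((a, b), (c, d)) ↦ (a, d)`, where `D = {b = c}` is the
`Ω`-orthogonal of the inner diagonal `J = {((0, w), (w, 0))}`. Isotropy is a direct computation.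
For coisotropy, if `(x₀, x₂)` is orthogonal to the composition then `((x₀, 0), (0, x₂))` is
orthogonal to `(L₀₁ × L₁₂) ∩ D`, hence lies in `(L₀₁ × L₁₂)^Ω + J` since `Ω` is nondegenerate.
A decomposition `((x₀, -w), (-w, x₂)) + ((0, w), (w, 0))` exhibits the middle vector `-w`.
-/

open LinearMap (BilinForm)

namespace LinearMap.BilinForm

section CommRing

variable {R M M' : Type*} [CommRing R] [AddCommGroup M] [Module R M] [AddCommGroup M']
  [Module R M']

def prod (B : BilinForm R M) (B' : BilinForm R M') : BilinForm R (M × M') :=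
  B.comp (LinearMap.fst R M M') (LinearMap.fst R M M')
    + B'.comp (LinearMap.snd R M M') (LinearMap.snd R M M')

@[simp]
lemma prod_apply (B : BilinForm R M) (B' : BilinForm R M') (x y : M × M') :
    B.prod B' x y = B x.1 y.1 + B' x.2 y.2 := rfl

lemma IsAlt.prod {B : BilinForm R M} {B' : BilinForm R M'} (h : B.IsAlt) (h' : B'.IsAlt) :
    (B.prod B').IsAlt := fun x => by simp [h x.1, h' x.2]

lemma Nondegenerate.neg {B : BilinForm R M} (h : B.Nondegenerate) : (-B).Nondegenerate :=
  ⟨fun x hx => h.1 x fun y => by simpa using hx y, fun y hy => h.2 y fun x => by simpa using hy x⟩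

lemma Nondegenerate.prod {B : BilinForm R M} {B' : BilinForm R M'} (h : B.Nondegenerate)
    (h' : B'.Nondegenerate) : (B.prod B').Nondegenerate :=
  ⟨fun x hx => Prod.ext (h.1 _ fun y => by simpa using hx (y, 0))
      (h'.1 _ fun y => by simpa using hx (0, y)),
    fun x hx => Prod.ext (h.2 _ fun y => by simpa using hx (y, 0))
      (h'.2 _ fun y => by simpa using hx (0, y))⟩

lemma orthogonal_prod (B : BilinForm R M) (B' : BilinForm R M') (p : Submodule R M)
    (p' : Submodule R M') :
    (B.prod B').orthogonal (p.prod p') = (B.orthogonal p).prod (B'.orthogonal p') := by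
  ext x
  simp only [mem_orthogonal_iff, Submodule.mem_prod, prod_apply, Prod.forall]
  constructor
  · intro h
    exact ⟨fun y hy => by simpa using h y 0 ⟨hy, zero_mem _⟩,
      fun y hy => by simpa using h 0 y ⟨zero_mem _, hy⟩⟩
  · rintro ⟨h, h'⟩ y y' ⟨hy, hy'⟩
    rw [h y hy, h' y' hy', add_zero]

lemma orthogonal_sup (B : BilinForm R M) (p q : Submodule R M) :
    B.orthogonal (p ⊔ q) = B.orthogonal p ⊓ B.orthogonal q := by
  refine le_antisymm (le_inf (orthogonal_le le_sup_left) (orthogonal_le le_sup_right)) ?_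
  rintro x ⟨hp, hq⟩ _ hn
  obtain ⟨y, hy, z, hz, rfl⟩ := Submodule.mem_sup.mp hn
  rw [map_add, LinearMap.add_apply, hp y hy, hq z hz, add_zero]

end CommRing

lemma orthogonal_inf {K V : Type*} [Field K] [AddCommGroup V] [Module K V] [FiniteDimensional K V]
    {B : BilinForm K V} (hB : B.Nondegenerate) (hB₀ : B.IsRefl) (p q : Submodule K V) :
    B.orthogonal (p ⊓ q) = B.orthogonal p ⊔ B.orthogonal q := by
  rw [← orthogonal_orthogonal hB hB₀ (_ ⊔ _), orthogonal_sup, orthogonal_orthogonal hB hB₀,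
    orthogonal_orthogonal hB hB₀]

end LinearMap.BilinForm

section Symplectic

variable {V V' : Type*} [AddCommGroup V] [Module ℝ V] [AddCommGroup V'] [Module ℝ V']

lemma IsSymplectic.isRefl {ω : BF V} (h : IsSymplectic ω) : ω.IsRefl :=
  BilinForm.IsAlt.isRefl h.1

lemma IsSymplectic.neg {ω : BF V} (h : IsSymplectic ω) : IsSymplectic (-ω) :=
  ⟨BilinForm.IsAlt.neg h.1, h.2.neg⟩

lemma IsSymplectic.prod {ω : BF V} {ω' : BF V'} (h : IsSymplectic ω) (h' : IsSymplectic ω') :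
    IsSymplectic (ω.prod ω') :=
  ⟨BilinForm.IsAlt.prod h.1 h'.1, h.2.prod h'.2⟩

@[simp]
lemma prodForm_apply (ω : BF V) (ω' : BF V') (x y : V × V') :
    prodForm ω ω' x y = ω' x.2 y.2 - ω x.1 y.1 := rfl

lemma prodForm_eq_prod (ω : BF V) (ω' : BF V') : prodForm ω ω' = (-ω).prod ω' := by
  refine LinearMap.ext₂ fun x y => ?_
  simp only [prodForm_apply, BilinForm.prod_apply, LinearMap.neg_apply]
  ring

lemma IsSymplectic.prodForm {ω : BF V} {ω' : BF V'} (h : IsSymplectic ω)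
    (h' : IsSymplectic ω') : IsSymplectic (prodForm ω ω') :=
  prodForm_eq_prod ω ω' ▸ h.neg.prod h'

end Symplectic

section Composition

variable {V₀ V₁ V₂ : Type*} [AddCommGroup V₀] [Module ℝ V₀] [AddCommGroup V₁] [Module ℝ V₁]
  [AddCommGroup V₂] [Module ℝ V₂]

lemma lagComp_le_orthogonal {ω₀ : BF V₀} {ω₁ : BF V₁} {ω₂ : BF V₂}
    {L₀₁ : Submodule ℝ (V₀ × V₁)} {L₁₂ : Submodule ℝ (V₁ × V₂)}
    (h₀₁ : L₀₁ ≤ (prodForm ω₀ ω₁).orthogonal L₀₁) (h₁₂ : L₁₂ ≤ (prodForm ω₁ ω₂).orthogonal L₁₂) :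
    LagComp L₀₁ L₁₂ ≤ (prodForm ω₀ ω₂).orthogonal (LagComp L₀₁ L₁₂) := by
  rintro ⟨x₀, x₂⟩ ⟨v, hx₀₁, hx₁₂⟩ ⟨y₀, y₂⟩ ⟨u, hy₀₁, hy₁₂⟩
  have e₀₁ := h₀₁ hx₀₁ _ hy₀₁
  have e₁₂ := h₁₂ hx₁₂ _ hy₁₂
  simp only [prodForm_apply] at e₀₁ e₁₂ ⊢
  linarith

variable (V₀ V₁ V₂) in
def innerDiagonal : Submodule ℝ ((V₀ × V₁) × (V₁ × V₂)) :=
  LinearMap.range (((0 : V₁ →ₗ[ℝ] V₀).prod LinearMap.id).prod (LinearMap.id.prod 0))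

lemma mem_innerDiagonal {x : (V₀ × V₁) × (V₁ × V₂)} :
    x ∈ innerDiagonal V₀ V₁ V₂ ↔ ∃ w, ((0, w), (w, 0)) = x :=
  Iff.rfl

lemma mem_orthogonal_innerDiagonal {ω₀ : BF V₀} {ω₁ : BF V₁} {ω₂ : BF V₂}
    (h₁ : ω₁.SeparatingRight) {x : (V₀ × V₁) × (V₁ × V₂)} :
    x ∈ ((prodForm ω₀ ω₁).prod (prodForm ω₁ ω₂)).orthogonal (innerDiagonal V₀ V₁ V₂) ↔
      x.1.2 = x.2.1 := by
  have pairing (w : V₁) :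
      (prodForm ω₀ ω₁).prod (prodForm ω₁ ω₂) ((0, w), (w, 0)) x = ω₁ w (x.1.2 - x.2.1) := by
    simp only [BilinForm.prod_apply, prodForm_apply, map_zero, LinearMap.zero_apply, map_sub]
    ring
  simp only [BilinForm.mem_orthogonal_iff, mem_innerDiagonal, forall_exists_index,
    forall_apply_eq_imp_iff, pairing]
  exact ⟨fun h => sub_eq_zero.1 (h₁ _ h), fun h w => by rw [h, sub_self, map_zero]⟩

lemma orthogonal_lagComp_le [FiniteDimensional ℝ V₀] [FiniteDimensional ℝ V₁]
    [FiniteDimensional ℝ V₂] {ω₀ : BF V₀} {ω₁ : BF V₁} {ω₂ : BF V₂} (h₀ : IsSymplectic ω₀)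
    (h₁ : IsSymplectic ω₁) (h₂ : IsSymplectic ω₂) {L₀₁ : Submodule ℝ (V₀ × V₁)}
    {L₁₂ : Submodule ℝ (V₁ × V₂)} (h₀₁ : (prodForm ω₀ ω₁).orthogonal L₀₁ ≤ L₀₁)
    (h₁₂ : (prodForm ω₁ ω₂).orthogonal L₁₂ ≤ L₁₂) :
    (prodForm ω₀ ω₂).orthogonal (LagComp L₀₁ L₁₂) ≤ LagComp L₀₁ L₁₂ := by
  set Ω := (prodForm ω₀ ω₁).prod (prodForm ω₁ ω₂)
  have hΩ : IsSymplectic Ω := (h₀.prodForm h₁).prod (h₁.prodForm h₂)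
  rintro ⟨x₀, x₂⟩ hx
  have hxΩ : ((x₀, 0), (0, x₂)) ∈
      Ω.orthogonal (L₀₁.prod L₁₂ ⊓ Ω.orthogonal (innerDiagonal V₀ V₁ V₂)) := by
    rintro ⟨⟨a, b⟩, c, d⟩ ⟨⟨hab, hcd⟩, hbc⟩
    obtain rfl : b = c := (mem_orthogonal_innerDiagonal h₁.2.2).1 hbc
    have := hx (a, d) ⟨b, hab, hcd⟩
    simp only [Ω, BilinForm.prod_apply, prodForm_apply, map_zero] at this ⊢
    linarith
  rw [BilinForm.orthogonal_inf hΩ.2 hΩ.isRefl, BilinForm.orthogonal_orthogonal hΩ.2 hΩ.isRefl,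
    BilinForm.orthogonal_prod] at hxΩ
  obtain ⟨⟨⟨a, b⟩, c, d⟩, ⟨hab, hcd⟩, j, hj, hsum⟩ := Submodule.mem_sup.1 hxΩ
  obtain ⟨w, rfl⟩ := mem_innerDiagonal.1 hj
  simp only [Prod.mk_add_mk, add_zero, Prod.mk.injEq] at hsum
  obtain ⟨⟨rfl, hb⟩, hc, rfl⟩ := hsum
  obtain rfl : b = -w := eq_neg_of_add_eq_zero_left hb
  obtain rfl : c = -w := eq_neg_of_add_eq_zero_left hc
  exact ⟨-w, h₀₁ hab, h₁₂ hcd⟩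

end Composition

/-- The geometric composition of linear Lagrangian correspondences is a
Lagrangian subspace of V₀⁻ × V₂. -/
theorem lagrangian_comp_isLagrangian
    {V₀ V₁ V₂ : Type} [AddCommGroup V₀] [Module ℝ V₀] [AddCommGroup V₁] [Module ℝ V₁]
    [AddCommGroup V₂] [Module ℝ V₂]
    [FiniteDimensional ℝ V₀] [FiniteDimensional ℝ V₁] [FiniteDimensional ℝ V₂]
    (ω₀ : BF V₀) (ω₁ : BF V₁) (ω₂ : BF V₂)
    (h₀ : IsSymplectic ω₀) (h₁ : IsSymplectic ω₁) (h₂ : IsSymplectic ω₂)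
    (L₀₁ : Submodule ℝ (V₀ × V₁)) (L₁₂ : Submodule ℝ (V₁ × V₂))
    (hL₀₁ : IsLagrangian (prodForm ω₀ ω₁) L₀₁) (hL₁₂ : IsLagrangian (prodForm ω₁ ω₂) L₁₂) :
    IsLagrangian (prodForm ω₀ ω₂) (LagComp L₀₁ L₁₂) :=
  le_antisymm (orthogonal_lagComp_le h₀ h₁ h₂ hL₀₁.le hL₁₂.le)
    (lagComp_le_orthogonal hL₀₁.ge hL₁₂.ge)
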